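/- arXiv:2010.09545 — 2 statements merged into one kernel-verified Lean document; each statement's English description precedes it below -/
import Mathlib

section
/- For each l ∈ {1,…,k}, the value μ_l = 2 + 2cos(2πl/(2k+1)) = 4cos²(πl/(2k+1)) is an eigenvalue of the k×k tridiagonal matrix M_k with M_{11}=1, M_{ii}=2 for i≥2, and -1 on the sub- and super-diagonals. These are exactly the k eigenvalues of M_k. -/
open Matrix Real

theorem stmt3 (k : ℕ) (hk : 1 ≤ k)
    (M : Matrix (Fin k) (Fin k) ℝ)
    (hM : ∀ i j : Fin k, M i j =
      if i = j then (if (i : ℕ) = 0 then 1 else 2)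
      else if (i : ℕ) + 1 = (j : ℕ) ∨ (j : ℕ) + 1 = (i : ℕ) then -1 else 0) :
    (∀ l : ℕ, l ∈ Finset.Icc 1 k →
      (2 + 2 * Real.cos (2 * π * l / (2 * k + 1))
        = 4 * Real.cos (π * l / (2 * k + 1)) ^ 2) ∧
      ∃ v : Fin k → ℝ, v ≠ 0 ∧
        M.mulVec v = (2 + 2 * Real.cos (2 * π * l / (2 * k + 1))) • v) ∧
    (∀ μ : ℝ, (∃ v : Fin k → ℝ, v ≠ 0 ∧ M.mulVec v = μ • v) →
      ∃ l ∈ Finset.Icc 1 k, μ = 2 + 2 * Real.cos (2 * π * l / (2 * k + 1))) := by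
  have hden : (0:ℝ) < 2*(k:ℝ)+1 := by positivity
  have hden' : (2*(k:ℝ)+1) ≠ 0 := ne_of_gt hden
  -- Main construction of eigenvectors
  have main : ∀ l : ℕ, 1 ≤ l → l ≤ k →
      ∃ v : Fin k → ℝ, v ≠ 0 ∧ M.mulVec v
        = (2 + 2 * Real.cos (2 * π * (l:ℝ) / (2 * (k:ℝ) + 1))) • v := by
    intro l hl1 hlk
    obtain ⟨θ, hθ⟩ : ∃ θ : ℝ, 2 * π * (l:ℝ) / (2 * (k:ℝ) + 1) = θ := ⟨_, rfl⟩
    rw [hθ]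
    obtain ⟨α, hα⟩ : ∃ α : ℝ, π - θ = α := ⟨_, rfl⟩
    obtain ⟨W, hW⟩ : ∃ W : ℝ → ℝ, W = fun x => Real.sin (α * ((k:ℝ) - x)) := ⟨_, rfl⟩
    have hcos : Real.cos θ = -Real.cos α := by
      rw [← hα, Real.cos_pi_sub]; ring
    -- the recurrence
    have recA : ∀ x : ℝ, W (x-1) + W (x+1) = 2 * Real.cos α * W x := by
      intro x
      simp only [hW]
      rw [show α * ((k:ℝ) - (x-1)) = α*((k:ℝ)-x) + α by ring,
          show α * ((k:ℝ) - (x+1)) = α*((k:ℝ)-x) - α by ring,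
          Real.sin_add, Real.sin_sub]
      ring
    -- the boundary identity
    have hB : Real.sin (α * ((k:ℝ) + 1)) = Real.sin (α * (k:ℝ)) := by
      rw [← sub_eq_zero, Real.sin_sub_sin]
      have hc : Real.cos ((α * ((k:ℝ) + 1) + α * (k:ℝ)) / 2) = 0 := by
        apply Real.cos_eq_zero_iff.mpr
        refine ⟨(k:ℤ) - (l:ℤ), ?_⟩
        rw [← hα, ← hθ]
        push_cast
        field_simp
        ring
      rw [hc]; ring
    have hθpos : 0 < θ := by
      rw [← hθ]
      apply div_pos _ hden
      have : (0:ℝ) < (l:ℝ) := by exact_mod_cast hl1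
      positivity
    have hθlt : θ < π := by
      rw [← hθ, div_lt_iff₀ hden]
      have hl : (l:ℝ) ≤ (k:ℝ) := by exact_mod_cast hlk
      nlinarith [Real.pi_pos]
    have hsinα : 0 < Real.sin α := by
      rw [← hα, Real.sin_pi_sub]
      exact Real.sin_pos_of_pos_of_lt_pi hθpos hθlt
    refine ⟨fun i => W ((i:ℕ):ℝ), ?_, ?_⟩
    · intro h0
      have h1 := congrFun h0 ⟨k-1, by omega⟩
      have h2 : W (((k-1:ℕ)):ℝ) = Real.sin α := by
        simp only [hW]
        congr 1
        push_cast [Nat.cast_sub hk]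
        ring
      simp only [Pi.zero_apply] at h1
      rw [h2] at h1
      exact absurd h1 (ne_of_gt hsinα)
    · funext i
      have hsplit : ∀ j : Fin k, M i j * W ((j:ℕ):ℝ) =
          (if i = j then (if (i:ℕ) = 0 then (1:ℝ) else 2) * W ((j:ℕ):ℝ) else 0)
          + (-(if (i:ℕ)+1 = (j:ℕ) then W ((j:ℕ):ℝ) else 0))
          + (-(if (j:ℕ)+1 = (i:ℕ) then W ((j:ℕ):ℝ) else 0)) := by
        intro j
        rw [hM i j]
        by_cases h1 : i = j
        · subst h1
          have hne : ¬((i:ℕ)+1 = (i:ℕ)) := by omega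
          simp [hne, mul_comm]
        · have h1' : (i:ℕ) ≠ (j:ℕ) := fun hc => h1 (Fin.ext hc)
          rw [if_neg h1, if_neg h1]
          by_cases h2 : (i:ℕ)+1 = (j:ℕ)
          · rw [if_pos (Or.inl h2), if_pos h2, if_neg (by omega)]; ring
          · by_cases h3 : (j:ℕ)+1 = (i:ℕ)
            · rw [if_pos (Or.inr h3), if_neg h2, if_pos h3]; ring
            · rw [if_neg (by tauto), if_neg h2, if_neg h3]; ring
      have hmv : M.mulVec (fun i => W ((i:ℕ):ℝ)) i
          = ∑ j : Fin k, M i j * W ((j:ℕ):ℝ) := by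
        simp [Matrix.mulVec, dotProduct]
      rw [hmv, Finset.sum_congr rfl (fun j _ => hsplit j)]
      have e1 : ∑ j : Fin k,
          ((if i = j then (if (i:ℕ) = 0 then (1:ℝ) else 2) * W ((j:ℕ):ℝ) else 0)
          + (-(if (i:ℕ)+1 = (j:ℕ) then W ((j:ℕ):ℝ) else 0))
          + (-(if (j:ℕ)+1 = (i:ℕ) then W ((j:ℕ):ℝ) else 0)))
          = (∑ j : Fin k, (if i = j then (if (i:ℕ) = 0 then (1:ℝ) else 2) * W ((j:ℕ):ℝ) else 0))
          - (∑ j : Fin k, (if (i:ℕ)+1 = (j:ℕ) then W ((j:ℕ):ℝ) else 0))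
          - (∑ j : Fin k, (if (j:ℕ)+1 = (i:ℕ) then W ((j:ℕ):ℝ) else 0)) := by
        rw [Finset.sum_add_distrib, Finset.sum_add_distrib, Finset.sum_neg_distrib,
          Finset.sum_neg_distrib]
        ring
      rw [e1]
      have e2 : (∑ j : Fin k, (if i = j then (if (i:ℕ) = 0 then (1:ℝ) else 2) * W ((j:ℕ):ℝ) else 0))
          = (if (i:ℕ) = 0 then (1:ℝ) else 2) * W ((i:ℕ):ℝ) := by
        rw [Finset.sum_ite_eq]
        simp
      rw [e2]
      -- evaluate the superdiagonal sum
      have hS1 : (∑ j : Fin k, (if (i:ℕ)+1 = (j:ℕ) then W ((j:ℕ):ℝ) else 0))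
          = W (((i:ℕ):ℝ) + 1) := by
        by_cases h : (i:ℕ)+1 < k
        · rw [Finset.sum_eq_single (⟨(i:ℕ)+1, h⟩ : Fin k)]
          · rw [if_pos rfl]
            norm_num
          · intro b _ hb
            rw [if_neg]
            intro hc
            exact hb (Fin.ext hc.symm)
          · intro hni
            exact absurd (Finset.mem_univ _) hni
        · have hik : (i:ℕ)+1 = k := by have := i.isLt; omega
          have hzero : (∑ j : Fin k, (if (i:ℕ)+1 = (j:ℕ) then W ((j:ℕ):ℝ) else 0)) = 0 := by
            apply Finset.sum_eq_zero
            intro b _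
            rw [if_neg]
            have := b.isLt; omega
          rw [hzero]
          have hz : α * ((k:ℝ) - (((i:ℕ):ℝ)+1)) = 0 := by
            have hcast : ((i:ℕ):ℝ) + 1 = (k:ℝ) := by exact_mod_cast hik
            rw [hcast, sub_self, mul_zero]
          simp only [hW]
          rw [hz, Real.sin_zero]
      rw [hS1]
      have hrhs : (((2 + 2 * Real.cos θ) • fun i : Fin k => W ((i:ℕ):ℝ)) i)
          = (2 + 2 * Real.cos θ) * W ((i:ℕ):ℝ) := rfl
      rw [hrhs, hcos]
      by_cases hi0 : (i:ℕ) = 0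
      · -- first row
        have hS2 : (∑ j : Fin k, (if (j:ℕ)+1 = (i:ℕ) then W ((j:ℕ):ℝ) else 0)) = 0 := by
          apply Finset.sum_eq_zero
          intro b _
          rw [if_neg (by omega)]
        rw [hS2, if_pos hi0, hi0]
        have rec0 := recA 0
        have hWm1 : W (0-1) = W 0 := by
          simp only [hW]
          rw [show α * ((k:ℝ) - (0-1)) = α * ((k:ℝ)+1) by ring,
            show α * ((k:ℝ) - (0:ℝ)) = α * (k:ℝ) by ring]
          exact hB
        push_cast
        linear_combination hWm1 - rec0
      · -- other rows
        have hipos : 1 ≤ (i:ℕ) := by omega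
        have hS2 : (∑ j : Fin k, (if (j:ℕ)+1 = (i:ℕ) then W ((j:ℕ):ℝ) else 0))
            = W (((i:ℕ):ℝ) - 1) := by
          rw [Finset.sum_eq_single (⟨(i:ℕ)-1, by have := i.isLt; omega⟩ : Fin k)]
          · rw [if_pos (by simp; omega)]
            congr 1
            push_cast [Nat.cast_sub hipos]
            ring
          · intro b _ hb
            rw [if_neg]
            intro hc
            exact hb (Fin.ext (show (b:ℕ) = (i:ℕ)-1 by omega))
          · intro hni
            exact absurd (Finset.mem_univ _) hni
        rw [hS2, if_neg hi0]
        have reci := recA ((i:ℕ):ℝ)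
        linear_combination - reci
  constructor
  · intro l hl
    rw [Finset.mem_Icc] at hl
    constructor
    · rw [show 2 * π * (l:ℝ) / (2 * (k:ℝ) + 1) = 2 * (π * (l:ℝ) / (2 * (k:ℝ) + 1)) by ring,
        Real.cos_two_mul]
      ring
    · exact main l hl.1 hl.2
  · intro μ hex
    obtain ⟨v, hv0, hveq⟩ := hex
    by_contra hcon
    push_neg at hcon
    -- build k+1 linearly independent eigenvectors
    obtain ⟨φ, hφ⟩ : ∃ φ : Fin k → ℝ, φ = fun j : Fin k =>
        2 + 2 * Real.cos (2 * π * ((((j:ℕ)+1 : ℕ)):ℝ) / (2 * (k:ℝ) + 1)) := ⟨_, rfl⟩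
    have H : ∀ j : Fin k, ∃ w : Fin k → ℝ, w ≠ 0 ∧ M.mulVec w = φ j • w := by
      intro j
      rw [hφ]
      exact main ((j:ℕ)+1) (by omega) (by have := j.isLt; omega)
    choose w hw0 hweq using H
    have hφinj : Function.Injective φ := by
      intro a b hab
      rw [hφ] at hab
      simp only at hab
      have hc : Real.cos (2 * π * ((((a:ℕ)+1 : ℕ)):ℝ) / (2 * (k:ℝ) + 1))
          = Real.cos (2 * π * ((((b:ℕ)+1 : ℕ)):ℝ) / (2 * (k:ℝ) + 1)) := by linarith
      have hmem : ∀ c : Fin k, 2 * π * ((((c:ℕ)+1 : ℕ)):ℝ) / (2 * (k:ℝ) + 1) ∈ Set.Icc 0 π := by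
        intro c
        constructor
        · positivity
        · rw [div_le_iff₀ hden]
          have h1 : (((c:ℕ):ℝ)) + 1 ≤ (k:ℝ) := by
            have := c.isLt
            exact_mod_cast this
          push_cast
          nlinarith [Real.pi_pos]
      have h3 := Real.strictAntiOn_cos.injOn (hmem a) (hmem b) hc
      have h2 : (((a:ℕ):ℝ)) = ((b:ℕ):ℝ) := by
        have h4 : (((a:ℕ)+1:ℕ):ℝ) = (((b:ℕ)+1:ℕ):ℝ) := by
          have h5 : (2*π/(2*(k:ℝ)+1)) * (((a:ℕ)+1:ℕ):ℝ) = (2*π/(2*(k:ℝ)+1)) * (((b:ℕ)+1:ℕ):ℝ) := by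
            rw [div_mul_eq_mul_div, div_mul_eq_mul_div]
            exact h3
          have h6 : (2*π/(2*(k:ℝ)+1)) ≠ 0 := by positivity
          exact mul_left_cancel₀ h6 h5
        push_cast at h4
        linarith
      exact Fin.ext (by exact_mod_cast h2)
    have hμne : ∀ j : Fin k, μ ≠ φ j := by
      intro j
      rw [hφ]
      have := hcon ((j:ℕ)+1) (Finset.mem_Icc.mpr ⟨by omega, by have := j.isLt; omega⟩)
      simpa using this
    obtain ⟨μfun, hμfun⟩ : ∃ μfun : Option (Fin k) → ℝ, μfun = fun o => o.elim μ φ := ⟨_, rfl⟩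
    obtain ⟨vfun, hvfun⟩ : ∃ vfun : Option (Fin k) → (Fin k → ℝ),
        vfun = fun o => o.elim v w := ⟨_, rfl⟩
    have hinj : Function.Injective μfun := by
      intro o1 o2 h
      rw [hμfun] at h
      match o1, o2 with
      | none, none => rfl
      | none, some b => exact absurd h (hμne b)
      | some a, none => exact absurd h.symm (hμne a)
      | some a, some b => exact congrArg _ (hφinj h)
    have heig : ∀ o : Option (Fin k),
        Module.End.HasEigenvector (M.mulVecLin : Module.End ℝ (Fin k → ℝ)) (μfun o) (vfun o) := by
      intro o
      constructor
      · apply Module.End.mem_eigenspace_iff.mpr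
        match o with
        | none =>
          rw [hμfun, hvfun]
          simpa [Matrix.mulVecLin_apply] using hveq
        | some j =>
          rw [hμfun, hvfun]
          simpa [Matrix.mulVecLin_apply] using hweq j
      · match o with
        | none => rw [hvfun]; exact hv0
        | some j => rw [hvfun]; exact hw0 j
    have hli := Module.End.eigenvectors_linearIndependent'
      (M.mulVecLin : Module.End ℝ (Fin k → ℝ)) μfun hinj vfun heig
    have hcard := hli.fintype_card_le_finrank
    rw [Module.finrank_fintype_fun_eq_card] at hcard
    simp [Fintype.card_option] at hcard
end

section
/- The singular values of the lower triangular all-ones matrix L ∈ ℝ^{k×k} are σ_l = 1/(2cos(πl/(2k+1))) for l = 1, …, k. In particular, the largest singular value (the operator 2-norm) of L equals 1/(2 sin(π/(2(2k+1)))). -/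
/-!
On sequences, `L` is the prefix-sum operator and `Lᵀ` the suffix-sum operator. For
`θ = π l / (2k+1)` and `b = π - 2θ`, the sequence `s j = sin ((k - j) b)` satisfies
`s j + s (j+2) = 2 cos b · s (j+1)` with boundary values `s k = 0` and `s (-1) = s 0`, so both
sums telescope and `(2 - 2 cos b) LᵀL s = s`, where `2 - 2 cos b = (2 cos θ)²`. The `k` values
`l = 1, …, k` give `k` distinct eigenvalues, which therefore exhaust the spectrum of the `k × k`
matrix `LᵀL`; the operator norm of `L` is the square root of the largest one, at `l = k`, where
`cos θ = sin (π / (2(2k+1)))`.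
-/

open Matrix Real Finset
open scoped ENNReal NNReal

namespace Matrix

variable {K n : Type*} [Field K] [Fintype n] [DecidableEq n]

theorem mem_spectrum_iff_exists_mulVec_eq_smul {M : Matrix n n K} {μ : K} :
    μ ∈ spectrum K M ↔ ∃ v ≠ 0, M *ᵥ v = μ • v := by
  rw [← spectrum_toLin', ← Module.End.hasEigenvalue_iff_mem_spectrum]
  constructor
  · intro h
    obtain ⟨v, hv⟩ := h.exists_hasEigenvector
    exact ⟨v, hv.2, by simpa using hv.apply_eq_smul⟩
  · rintro ⟨v, hv, h⟩
    exact Module.End.hasEigenvalue_of_hasEigenvector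
      ⟨by simpa [Module.End.mem_eigenspace_iff] using h, hv⟩

theorem ncard_spectrum_le (M : Matrix n n K) : (spectrum K M).ncard ≤ Fintype.card n := by
  classical
  have hroots : spectrum K M = (M.charpoly.roots.toFinset : Set K) := by
    ext μ
    simp [mem_spectrum_iff_isRoot_charpoly, M.charpoly_monic.ne_zero]
  rw [hroots, Set.ncard_coe_finset]
  calc M.charpoly.roots.toFinset.card ≤ M.charpoly.roots.card := Multiset.toFinset_card_le _
    _ ≤ M.charpoly.natDegree := Polynomial.card_roots' _
    _ = Fintype.card n := M.charpoly_natDegree_eq_dim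

theorem spectrum_eq_of_subset_of_card_le {M : Matrix n n K} {D : Finset K}
    (hD : (D : Set K) ⊆ spectrum K M) (hcard : Fintype.card n ≤ D.card) :
    spectrum K M = D :=
  (Set.eq_of_subset_of_ncard_le hD (by simpa using M.ncard_spectrum_le.trans hcard)
    M.finite_spectrum).symm

end Matrix

theorem ContinuousLinearMap.norm_eq_of_isGreatest_spectrum {E : Type*} [NormedAddCommGroup E]
    [InnerProductSpace ℝ E] [CompleteSpace E] {T : E →L[ℝ] E} (hT : IsSelfAdjoint T)
    (hnonneg : ∀ μ ∈ spectrum ℝ T, 0 ≤ μ) {c : ℝ} (hc : IsGreatest (spectrum ℝ T) c) :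
    ‖T‖ = c := by
  have hradius : spectralRadius ℝ T = ‖T‖₊ := T.spectralRadius_eq_nnnorm hT
  obtain ⟨μ, hμ, hμT⟩ := spectrum.exists_nnnorm_eq_spectralRadius_of_nonempty ⟨c, hc.1⟩
  have hcT : (‖c‖₊ : ℝ≥0∞) ≤ spectralRadius ℝ T :=
    le_iSup₂ (f := fun k (_ : k ∈ spectrum ℝ T) => (‖k‖₊ : ℝ≥0∞)) c hc.1
  rw [hradius, ENNReal.coe_inj] at hμT
  rw [hradius, ENNReal.coe_le_coe, ← NNReal.coe_le_coe, coe_nnnorm, coe_nnnorm,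
    Real.norm_of_nonneg (hnonneg c hc.1)] at hcT
  refine le_antisymm ?_ hcT
  rw [← coe_nnnorm, ← hμT, coe_nnnorm, Real.norm_of_nonneg (hnonneg μ hμ)]
  exact hc.2 hμ

theorem Matrix.norm_toEuclideanCLM_eq_sqrt_of_isGreatest {n : Type*} [Fintype n] [DecidableEq n]
    (A : Matrix n n ℝ) {c : ℝ} (hc : IsGreatest (spectrum ℝ (Aᵀ * A)) c) :
    ‖toEuclideanCLM (𝕜 := ℝ) A‖ = √c := by
  have hstar : toEuclideanCLM (𝕜 := ℝ) (Aᵀ * A) =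
      star (toEuclideanCLM (𝕜 := ℝ) A) * toEuclideanCLM (𝕜 := ℝ) A := by
    rw [map_mul, ← conjTranspose_eq_transpose_of_trivial, ← star_eq_conjTranspose, map_star]
  have hspec : spectrum ℝ (toEuclideanCLM (𝕜 := ℝ) (Aᵀ * A)) = spectrum ℝ (Aᵀ * A) :=
    AlgEquiv.spectrum_eq (toEuclideanCLM (𝕜 := ℝ) (n := n)).toAlgEquiv _
  have hnonneg := (posSemidef_iff_isHermitian_and_spectrum_nonneg.mp
    (conjTranspose_eq_transpose_of_trivial A ▸ posSemidef_conjTranspose_mul_self A)).2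
  have hnorm : ‖toEuclideanCLM (𝕜 := ℝ) (Aᵀ * A)‖ = c := by
    refine ContinuousLinearMap.norm_eq_of_isGreatest_spectrum ?_ (hspec ▸ hnonneg) (hspec ▸ hc)
    rw [hstar]
    exact IsSelfAdjoint.star_mul_self _
  rw [← hnorm, hstar, ContinuousLinearMap.star_eq_adjoint, ContinuousLinearMap.mul_def,
    ContinuousLinearMap.norm_adjoint_comp_self, Real.sqrt_mul_self (norm_nonneg _)]

def lowerOnes (R : Type*) [Zero R] [One R] (k : ℕ) : Matrix (Fin k) (Fin k) R :=
  of fun i j => if (j : ℕ) ≤ i then 1 else 0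

section LowerOnes

variable {R : Type*} {k : ℕ}

theorem lowerOnes_mulVec [NonAssocSemiring R] (s : ℕ → R) (i : Fin k) :
    (lowerOnes R k *ᵥ fun j => s j) i = ∑ j ∈ range (i + 1), s j := by
  have hfilter : (range k).filter (· ≤ (i : ℕ)) = range (i + 1) := by
    ext j; simp only [mem_filter, mem_range]; omega
  simp only [mulVec, dotProduct, lowerOnes, of_apply, ite_mul, one_mul, zero_mul]
  rw [Fin.sum_univ_eq_sum_range (fun j => if j ≤ (i : ℕ) then s j else 0), ← sum_filter, hfilter]

theorem transpose_lowerOnes_mulVec [NonAssocSemiring R] (s : ℕ → R) (i : Fin k) :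
    ((lowerOnes R k)ᵀ *ᵥ fun j => s j) i = ∑ j ∈ Ico (i : ℕ) k, s j := by
  have hfilter : (range k).filter ((i : ℕ) ≤ ·) = Ico (i : ℕ) k := by
    ext j; simp only [mem_filter, mem_range, mem_Ico]; omega
  simp only [mulVec, dotProduct, transpose_apply, lowerOnes, of_apply, ite_mul, one_mul, zero_mul]
  rw [Fin.sum_univ_eq_sum_range (fun j => if (i : ℕ) ≤ j then s j else 0), ← sum_filter, hfilter]

theorem mul_sum_range_succ_of_recurrence [CommRing R] {s : ℕ → R} {μ : R}
    (hrec : ∀ j, s j + s (j + 2) = (2 - μ) * s (j + 1)) (h0 : s 0 - s 1 = μ * s 0) (i : ℕ) :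
    μ * ∑ j ∈ range (i + 1), s j = s i - s (i + 1) := by
  induction i with
  | zero => rw [zero_add, sum_range_one, h0]
  | succ i ih =>
    rw [sum_range_succ, mul_add, ih]
    linear_combination hrec i

theorem smul_transpose_lowerOnes_mul_lowerOnes_mulVec [CommRing R] {s : ℕ → R} {μ : R}
    (hrec : ∀ j, s j + s (j + 2) = (2 - μ) * s (j + 1)) (h0 : s 0 - s 1 = μ * s 0)
    (hk : s k = 0) :
    μ • (((lowerOnes R k)ᵀ * lowerOnes R k) *ᵥ fun j => s j) = fun j : Fin k => s j := by
  have hprefix : μ • (lowerOnes R k *ᵥ fun j => s j) = fun j : Fin k => s j - s (j + 1) := by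
    ext i
    rw [Pi.smul_apply, lowerOnes_mulVec, smul_eq_mul, mul_sum_range_succ_of_recurrence hrec h0]
  ext i
  have htelescope := sum_Ico_sub (fun j => -s j) i.isLt.le
  simp only [neg_sub_neg] at htelescope
  rw [← mulVec_mulVec, ← mulVec_smul, hprefix,
    transpose_lowerOnes_mulVec (fun j => s j - s (j + 1)), htelescope, hk, sub_zero]

end LowerOnes

theorem smul_transpose_lowerOnes_mul_lowerOnes_mulVec_sin (k : ℕ) {b : ℝ}
    (hb : sin ((k + 1) * b) = sin (k * b)) :
    (2 - 2 * cos b) • (((lowerOnes ℝ k)ᵀ * lowerOnes ℝ k) *ᵥ fun j : Fin k => sin ((k - j) * b)) =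
      fun j : Fin k => sin ((k - j) * b) := by
  refine smul_transpose_lowerOnes_mul_lowerOnes_mulVec (s := fun j => sin ((k - j) * b))
    (fun j => ?_) ?_ (by simp)
  · rw [sub_sub_cancel, mul_right_comm, two_mul_sin_mul_cos, add_comm]
    push_cast
    ring_nf
  · have h := two_mul_sin_mul_cos (k * b) b
    rw [show k * b + b = (k + 1) * b by ring, hb] at h
    simp only [Nat.cast_zero, Nat.cast_one, sub_zero, sub_mul, one_mul]
    linear_combination h

noncomputable def lowerOnesAngle (k l : ℕ) : ℝ := π * l / (2 * k + 1)

noncomputable def sqSingularValue (k l : ℕ) : ℝ := (1 / (2 * cos (lowerOnesAngle k l))) ^ 2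

section Angles

variable {k l : ℕ}

theorem lowerOnesAngle_nonneg : 0 ≤ lowerOnesAngle k l := by
  unfold lowerOnesAngle; positivity

theorem lowerOnesAngle_pos (hl : 1 ≤ l) : 0 < lowerOnesAngle k l := by
  have : (0 : ℝ) < l := by exact_mod_cast hl
  unfold lowerOnesAngle; positivity

theorem lowerOnesAngle_lt_pi_div_two (hl : l ≤ k) : lowerOnesAngle k l < π / 2 := by
  rw [lowerOnesAngle, div_lt_iff₀ (by positivity)]
  have : (l : ℝ) ≤ k := by exact_mod_cast hl
  nlinarith [pi_pos]

theorem cos_lowerOnesAngle_pos (hl : l ≤ k) : 0 < cos (lowerOnesAngle k l) :=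
  cos_pos_of_mem_Ioo ⟨by linarith [pi_pos, lowerOnesAngle_nonneg (k := k) (l := l)],
    lowerOnesAngle_lt_pi_div_two hl⟩

theorem sin_succ_mul_pi_sub_two_mul_lowerOnesAngle (k l : ℕ) :
    sin ((k + 1) * (π - 2 * lowerOnesAngle k l)) = sin (k * (π - 2 * lowerOnesAngle k l)) := by
  have h : ((k : ℝ) + 1) * (π - 2 * lowerOnesAngle k l) =
      π - k * (π - 2 * lowerOnesAngle k l) + ((k - l : ℤ) : ℝ) * (2 * π) := by
    rw [lowerOnesAngle]
    field_simp
    push_cast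
    ring
  rw [h, sin_add_int_mul_two_pi, sin_pi_sub]

theorem strictMonoOn_sqSingularValue : StrictMonoOn (sqSingularValue k) (Set.Iic k) := by
  intro l hl l' hl' hll'
  have hθ : lowerOnesAngle k l < lowerOnesAngle k l' := by
    unfold lowerOnesAngle; gcongr
  have hcos : cos (lowerOnesAngle k l') < cos (lowerOnesAngle k l) :=
    strictAntiOn_cos ⟨lowerOnesAngle_nonneg, by linarith [lowerOnesAngle_lt_pi_div_two hl, pi_pos]⟩
      ⟨lowerOnesAngle_nonneg, by linarith [lowerOnesAngle_lt_pi_div_two hl', pi_pos]⟩ hθ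
  have hpos := cos_lowerOnesAngle_pos (Set.mem_Iic.mp hl)
  have hpos' := cos_lowerOnesAngle_pos (Set.mem_Iic.mp hl')
  unfold sqSingularValue
  gcongr

end Angles

theorem sqSingularValue_mem_spectrum {k l : ℕ} (hl : l ∈ Icc 1 k) :
    sqSingularValue k l ∈ spectrum ℝ ((lowerOnes ℝ k)ᵀ * lowerOnes ℝ k) := by
  obtain ⟨hl1, hlk⟩ := mem_Icc.mp hl
  set θ := lowerOnesAngle k l
  have hθ_pos : 0 < θ := lowerOnesAngle_pos hl1
  have hθ_lt : θ < π / 2 := lowerOnesAngle_lt_pi_div_two hlk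
  have hμ : 2 - 2 * cos (π - 2 * θ) = (2 * cos θ) ^ 2 := by
    rw [cos_pi_sub, cos_two_mul]; ring
  have hμ_ne : (2 * cos θ) ^ 2 ≠ 0 := by
    have := cos_lowerOnesAngle_pos hlk; positivity
  have hsin : 0 < sin (π - 2 * θ) := sin_pos_of_pos_of_lt_pi (by linarith) (by linarith)
  have heig := smul_transpose_lowerOnes_mul_lowerOnes_mulVec_sin k
    (sin_succ_mul_pi_sub_two_mul_lowerOnesAngle k l)
  rw [hμ] at heig
  refine mem_spectrum_iff_exists_mulVec_eq_smul.mpr ⟨fun j : Fin k => sin ((k - j) * (π - 2 * θ)),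
    fun h => ?_, ?_⟩
  · have hlast := congrFun h ⟨k - 1, by omega⟩
    rw [Pi.zero_apply, Nat.cast_sub (by omega), Nat.cast_one, sub_sub_cancel, one_mul] at hlast
    exact hsin.ne' hlast
  · rw [sqSingularValue, one_div, inv_pow, eq_inv_smul_iff₀ hμ_ne]
    exact heig

theorem spectrum_transpose_lowerOnes_mul_lowerOnes (k : ℕ) :
    spectrum ℝ ((lowerOnes ℝ k)ᵀ * lowerOnes ℝ k) = (Icc 1 k).image (sqSingularValue k) := by
  refine spectrum_eq_of_subset_of_card_le ?_ ?_
  · rw [coe_image, Set.image_subset_iff]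
    exact fun l hl => sqSingularValue_mem_spectrum (mem_coe.mp hl)
  · rw [card_image_of_injOn (strictMonoOn_sqSingularValue.injOn.mono ?_), Nat.card_Icc,
      Fintype.card_fin, Nat.add_sub_cancel]
    intro l hl
    exact Set.mem_Iic.mpr (mem_Icc.mp hl).2

theorem isGreatest_spectrum_transpose_lowerOnes_mul_lowerOnes {k : ℕ} (hk : 1 ≤ k) :
    IsGreatest (spectrum ℝ ((lowerOnes ℝ k)ᵀ * lowerOnes ℝ k)) (sqSingularValue k k) := by
  rw [spectrum_transpose_lowerOnes_mul_lowerOnes, coe_image]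
  refine ⟨Set.mem_image_of_mem _ (mem_Icc.mpr ⟨hk, le_rfl⟩), ?_⟩
  rintro _ ⟨l, hl, rfl⟩
  have hlk := (mem_Icc.mp hl).2
  exact strictMonoOn_sqSingularValue.monotoneOn hlk Set.self_mem_Iic hlk

theorem stmt4 (k : ℕ) (hk : 1 ≤ k)
    (L : Matrix (Fin k) (Fin k) ℝ)
    (hL : ∀ i j : Fin k, L i j = if (j : ℕ) ≤ (i : ℕ) then 1 else 0) :
    -- the σ_l² are exactly the eigenvalues of LᵀL
    (∀ l : ℕ, l ∈ Finset.Icc 1 k →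
      ∃ v : Fin k → ℝ, v ≠ 0 ∧
        (Lᵀ * L).mulVec v = ((1 / (2 * Real.cos (π * l / (2 * k + 1)))) ^ 2) • v) ∧
    (∀ μ : ℝ, (∃ v : Fin k → ℝ, v ≠ 0 ∧ (Lᵀ * L).mulVec v = μ • v) →
      ∃ l ∈ Finset.Icc 1 k, μ = (1 / (2 * Real.cos (π * l / (2 * k + 1)))) ^ 2) ∧
    -- the operator 2-norm of L equals the largest singular value
    ‖Matrix.toEuclideanCLM (𝕜 := ℝ) L‖ = 1 / (2 * Real.sin (π / (2 * (2 * k + 1)))) := by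
  obtain rfl : L = lowerOnes ℝ k := Matrix.ext hL
  have heig (μ : ℝ) : (∃ v ≠ 0, ((lowerOnes ℝ k)ᵀ * lowerOnes ℝ k) *ᵥ v = μ • v) ↔
      ∃ l ∈ Icc 1 k, sqSingularValue k l = μ := by
    rw [← mem_spectrum_iff_exists_mulVec_eq_smul, spectrum_transpose_lowerOnes_mul_lowerOnes,
      coe_image, Set.mem_image]
    rfl
  refine ⟨fun l hl => (heig _).mpr ⟨l, hl, rfl⟩, fun μ hμ => ?_, ?_⟩
  · obtain ⟨l, hl, rfl⟩ := (heig μ).mp hμ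
    exact ⟨l, hl, rfl⟩
  · have hsin : sin (π / (2 * (2 * k + 1))) = cos (lowerOnesAngle k k) := by
      rw [← cos_pi_div_two_sub, lowerOnesAngle]
      congr 1
      field_simp
      ring
    have hcos := cos_lowerOnesAngle_pos (le_refl k)
    rw [norm_toEuclideanCLM_eq_sqrt_of_isGreatest _
      (isGreatest_spectrum_transpose_lowerOnes_mul_lowerOnes hk), sqSingularValue,
      sqrt_sq (by positivity), hsin]
end
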